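/- Let τ be a finite relational signature and Γ a valued τ-structure with countable domain C and oligomorphic automorphism group such that every valued relation of Γ takes only values ≥ 0. Let S ∈ τ be such that S^Γ attains the value 0 and attains at least one positive finite value; let m be the smallest positive value attained by S^Γ and M the largest finite value attained by any valued relation of Γ. Let R be the valued relation with R(a) = 0 if S^Γ(a) = 0 and R(a) = ∞ otherwise (i.e. R = Opt(S^Γ)). Let φ(x_1,…,x_n) = Σ_{i=1}^k φ_i be a finite formal sum of k atoms, each atom using a symbol of τ (interpreted in Γ) or the relation R, and let φ' be obtained from φ by replacing every atom involving R with k·⌈M/m⌉+1 copies of the same atom with R replaced by S^Γ. Then for every u ∈ ℚ and every a ∈ C^n: φ'(a) ≤ min(kM, u) if and only if φ(a) ≤ u. -/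

import Mathlib

open MeasureTheory
open scoped ENNReal NNReal

/-- The value space `ℚ ∪ {∞}`. -/
abbrev QInf : Type := WithTop ℚ

/-- The embedding of `ℚ ∪ {∞}` into the extended reals. -/
noncomputable def QInf.toE (x : QInf) : EReal :=
  WithTop.recTopCoe ⊤ (fun q : ℚ => ((q : ℝ) : EReal)) x

/-- A relational signature: a collection of relation symbols with arities. -/
structure Signature where
  symbols : Type
  arity : symbols → ℕ

/-- A valued `τ`-structure with domain `C`: each symbol is interpreted as a valued relation. -/
def VStruct (τ : Signature) (C : Type) : Type :=
  ∀ s : τ.symbols, (Fin (τ.arity s) → C) → QInf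

/-- An atom `R(x_{i_1},…,x_{i_k})` with variables from `V`. -/
structure SAtom (τ : Signature) (V : Type) where
  sym : τ.symbols
  vars : Fin (τ.arity sym) → V

/-- A `τ`-expression: a finite formal sum of atoms. -/
def Expr (τ : Signature) (V : Type) : Type := List (SAtom τ V)

/-- Evaluation of a `τ`-expression in a valued structure. -/
def Expr.eval {τ : Signature} {C V : Type} (Γ : VStruct τ C) (φ : Expr τ V)
    (a : V → C) : QInf :=
  (φ.map fun t => Γ t.sym fun i => a (t.vars i)).sum

/-- The product topology on `D → C` where `C` carries the discrete topology. -/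
def fnTop (D C : Type) : TopologicalSpace (D → C) :=
  @Pi.topologicalSpace D (fun _ => C) (fun _ => ⊥)

/-- The Borel σ-algebra on `D → C` for the product of discrete topologies. -/
noncomputable def fnBorel (D C : Type) : MeasurableSpace (D → C) :=
  @borel (D → C) (fnTop D C)

/-- A fractional map from `D` to `C`: a Borel probability measure on `C^D`. -/
def IsFracMap {D C : Type} (ω : @Measure (D → C) (fnBorel D C)) : Prop :=
  @IsProbabilityMeasure (D → C) (fnBorel D C) ω

/-- The positive part of an extended real, as an extended nonnegative real. -/
noncomputable def erealPos (x : EReal) : ℝ≥0∞ :=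
  if x = ⊤ then ⊤ else ENNReal.ofReal x.toReal

/-- The `EReal`-valued Lebesgue integral: integral of the positive part minus
integral of the negative part. -/
noncomputable def EIntg {D C : Type} (ω : @Measure (D → C) (fnBorel D C))
    (X : (D → C) → EReal) : EReal :=
  ((@MeasureTheory.lintegral (D → C) (fnBorel D C) ω fun f => erealPos (X f) : ℝ≥0∞) : EReal)
    - ((@MeasureTheory.lintegral (D → C) (fnBorel D C) ω fun f => erealPos (-X f) : ℝ≥0∞) : EReal)

/-- Existence of the `EReal`-valued Lebesgue integral: the integrand is Borel measurable and
not both the positive and the negative part have infinite integral. -/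
def EIntEx {D C : Type} (ω : @Measure (D → C) (fnBorel D C)) (X : (D → C) → EReal) : Prop :=
  (@Measurable (D → C) EReal (fnBorel D C) inferInstance X) ∧
    ((@MeasureTheory.lintegral (D → C) (fnBorel D C) ω fun f => erealPos (X f)) ≠ ⊤ ∨
      (@MeasureTheory.lintegral (D → C) (fnBorel D C) ω fun f => erealPos (-X f)) ≠ ⊤)

/-- A fractional homomorphism from `Δ` to `Γ`. -/
def IsFracHom {τ : Signature} {D C : Type} (Δ : VStruct τ D) (Γ : VStruct τ C)
    (ω : @Measure (D → C) (fnBorel D C)) : Prop :=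
  IsFracMap ω ∧
    ∀ (s : τ.symbols) (a : Fin (τ.arity s) → D),
      EIntEx ω (fun f => QInf.toE (Γ s (f ∘ a))) ∧
        EIntg ω (fun f => QInf.toE (Γ s (f ∘ a))) ≤ QInf.toE (Δ s a)

/-- An automorphism of a valued structure. -/
def IsVAuto {τ : Signature} {C : Type} (Γ : VStruct τ C) (α : Equiv.Perm C) : Prop :=
  ∀ (s : τ.symbols) (a : Fin (τ.arity s) → C), Γ s (fun i => α (a i)) = Γ s a

/-- The automorphism group of a valued structure is oligomorphic: for each `k` there are
finitely many orbits of `k`-tuples. -/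
def VOligo {τ : Signature} {C : Type} (Γ : VStruct τ C) : Prop :=
  ∀ k : ℕ, ∃ F : Set (Fin k → C), F.Finite ∧
    ∀ a : Fin k → C, ∃ b ∈ F, ∃ α : Equiv.Perm C,
      IsVAuto Γ α ∧ (fun i => α (b i)) = a

/-! An `Opt(S)` atom costs `0` or `∞`, while its replacement costs `N • S` with
`N = k⌈M/m⌉ + 1`. If every `Opt(S)` atom is satisfied, both expressions agree, and any finite value
of `φ` is a sum of `k` terms each at most `M`, so the cap `kM` in the threshold is harmless. If some
`Opt(S)` atom is violated, `φ = ∞`, and the replacement contributes at least `N • m > kM`, so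
`φ'` exceeds the cap. -/

section Penalty

variable {K : Type*} [Field K] [LinearOrder K] [IsStrictOrderedRing K] [FloorRing K]

lemma le_ceil_div_toNat_mul (M : K) {m : K} (hm : 0 < m) : M ≤ ⌈M / m⌉.toNat * m := by
  rw [Int.ceil_toNat, ← div_le_iff₀ hm]
  exact Nat.le_ceil _

lemma natCast_mul_lt_ceil_div_mul (k : ℕ) (M : K) {m : K} (hm : 0 < m) :
    k * M < (k * ⌈M / m⌉.toNat + 1) * m := by
  have hk : (0 : K) ≤ k := k.cast_nonneg
  nlinarith [mul_le_mul_of_nonneg_left (le_ceil_div_toNat_mul M hm) hk]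

end Penalty

lemma WithTop.coe_le_of_ne_zero {α : Type*} [LinearOrder α] [Zero α] {m : α} {x : WithTop α}
    (h0 : 0 ≤ x) (hx : x ≠ 0) (hmin : ∀ q : α, x = q → 0 < q → m ≤ q) : (m : WithTop α) ≤ x := by
  cases x using WithTop.recTopCoe with
  | top => exact le_top
  | coe q =>
    have hq : 0 < q := (WithTop.coe_nonneg.mp h0).lt_of_ne fun h => hx (by rw [← h]; rfl)
    exact WithTop.coe_le_coe.mpr (hmin q rfl hq)

lemma WithTop.coe_mul_lt_ceil_div_nsmul (k : ℕ) (M : ℚ) {m : ℚ} (hm : 0 < m)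
    {x : WithTop ℚ} (hx : (m : WithTop ℚ) ≤ x) :
    (((k : ℚ) * M : ℚ) : WithTop ℚ) < (k * ⌈M / m⌉.toNat + 1) • x :=
  calc (((k : ℚ) * M : ℚ) : WithTop ℚ)
      < (((k * ⌈M / m⌉.toNat + 1) • m : ℚ) : WithTop ℚ) := by
        rw [WithTop.coe_lt_coe, nsmul_eq_mul]
        exact_mod_cast natCast_mul_lt_ceil_div_mul k M hm
    _ = (k * ⌈M / m⌉.toNat + 1) • (m : WithTop ℚ) := WithTop.coe_nsmul _ _
    _ ≤ (k * ⌈M / m⌉.toNat + 1) • x := nsmul_le_nsmul_right hx _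

lemma List.sum_map_le_length_nsmul_of_ne_top {ι α : Type*} [AddCommMonoid α] [PartialOrder α]
    [IsOrderedAddMonoid α] [OrderTop α] {l : List ι} {g : ι → α} {M : α}
    (h0 : ∀ x ∈ l, 0 ≤ g x) (hM : ∀ x ∈ l, g x ≠ ⊤ → g x ≤ M) (hs : (l.map g).sum ≠ ⊤) :
    (l.map g).sum ≤ l.length • M := by
  have h0' : ∀ y ∈ l.map g, 0 ≤ y := by simpa using h0
  refine (List.sum_le_card_nsmul _ M ?_).trans_eq (by rw [List.length_map])
  simp only [List.mem_map, forall_exists_index, and_imp, forall_apply_eq_imp_iff₂]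
  exact fun x hx =>
    hM x hx (ne_top_of_le_ne_top hs (List.single_le_sum h0' _ (List.mem_map_of_mem hx)))

lemma List.sum_map_le_min_iff_of_eq_or_top {ι α : Type*} [AddCommMonoid α] [LinearOrder α]
    [IsOrderedAddMonoid α] [OrderTop α] {l : List ι} {f g : ι → α} {K u : α} (hu : u ≠ ⊤)
    (hf : ∀ x ∈ l, 0 ≤ f x) (hfg : ∀ x ∈ l, f x = g x ∨ (g x = ⊤ ∧ K < f x))
    (hK : (l.map g).sum ≠ ⊤ → (l.map g).sum ≤ K) :
    (l.map f).sum ≤ min K u ↔ (l.map g).sum ≤ u := by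
  by_cases heq : ∀ x ∈ l, f x = g x
  · rw [List.map_congr_left heq]
    exact ⟨fun hs => hs.trans (min_le_right _ _),
      fun hs => le_min (hK (ne_top_of_le_ne_top hu hs)) hs⟩
  push Not at heq
  obtain ⟨x, hx, hne⟩ := heq
  obtain ⟨hgx, hKf⟩ := (hfg x hx).resolve_left hne
  have hf' : ∀ y ∈ l.map f, 0 ≤ y := by simpa using hf
  have hg' : ∀ y ∈ l.map g, 0 ≤ y := by
    simp only [List.mem_map, forall_exists_index, and_imp, forall_apply_eq_imp_iff₂]
    intro y hy
    rcases hfg y hy with h | ⟨h, -⟩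
    · exact h ▸ hf y hy
    · exact h ▸ le_top
  have hg_top : (l.map g).sum = ⊤ :=
    top_le_iff.mp (hgx ▸ List.single_le_sum hg' _ (List.mem_map_of_mem hx))
  have hK_lt : K < (l.map f).sum := hKf.trans_le (List.single_le_sum hf' _ (List.mem_map_of_mem hx))
  rw [hg_top, top_le_iff]
  exact iff_of_false (fun hs => (hK_lt.trans_le (hs.trans (min_le_left _ _))).false) hu

theorem opt_reduction_correct_general {τ : Signature} {C : Type}
    (Γ : VStruct τ C)
    (hpos : ∀ (s : τ.symbols) (a : Fin (τ.arity s) → C), 0 ≤ Γ s a)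
    (S : τ.symbols)
    (hS0 : ∃ a, Γ S a = 0)
    (m : ℚ) (hm0 : 0 < m)
    (hmmin : ∀ (a : Fin (τ.arity S) → C) (q : ℚ), Γ S a = (q : QInf) → 0 < q → m ≤ q)
    (M : ℚ)
    (hMmax : ∀ (s : τ.symbols) (a : Fin (τ.arity s) → C) (q : ℚ),
      Γ s a = (q : QInf) → q ≤ M)
    {n : ℕ} (φ : List (SAtom τ (Fin n) ⊕ (Fin (τ.arity S) → Fin n))) :
    ∀ (u : ℚ) (a : Fin n → C),
      ((φ.map (Sum.elim
          (fun b => Γ b.sym fun i => a (b.vars i))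
          (fun v => (φ.length * (⌈M / m⌉).toNat + 1) • Γ S fun i => a (v i)))).sum
        ≤ min (((φ.length : ℚ) * M : ℚ) : QInf) (u : QInf))
      ↔ ((φ.map (Sum.elim
            (fun b => Γ b.sym fun i => a (b.vars i))
            (fun v => if Γ S (fun i => a (v i)) = 0 then (0 : QInf) else ⊤))).sum
          ≤ (u : QInf)) := by
  intro u a
  have hM0 : (0 : QInf) ≤ M := by
    obtain ⟨b, hb⟩ := hS0
    exact WithTop.coe_nonneg.mpr (hMmax S b 0 hb)
  refine List.sum_map_le_min_iff_of_eq_or_top WithTop.coe_ne_top ?_ ?_ fun hs => ?_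
  · rintro (b | v) -
    exacts [hpos _ _, nsmul_nonneg (hpos _ _) _]
  · rintro (b | v) -
    · exact .inl rfl
    by_cases h0 : Γ S (fun i => a (v i)) = 0
    · exact .inl (by simp [h0])
    · have hm_le := WithTop.coe_le_of_ne_zero (hpos S _) h0 (hmmin _)
      exact .inr (by simpa [h0] using WithTop.coe_mul_lt_ceil_div_nsmul φ.length M hm0 hm_le)
  · refine (List.sum_map_le_length_nsmul_of_ne_top (M := (M : QInf)) ?_ ?_ hs).trans_eq ?_
    · rintro (b | v) -
      · exact hpos _ _
      · dsimp only [Sum.elim_inr]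
        split_ifs <;> simp
    · rintro (b | v) - hfin
      · obtain ⟨q, hq⟩ := WithTop.ne_top_iff_exists.mp hfin
        exact hq ▸ WithTop.coe_le_coe.mpr (hMmax _ _ q hq.symm)
      · dsimp only [Sum.elim_inr] at hfin ⊢
        split_ifs at hfin ⊢
        exacts [hM0, absurd rfl hfin]
    · rw [← WithTop.coe_nsmul, nsmul_eq_mul]

/-- correctness of the reduction eliminating `Opt`: let `Γ` be a valued
structure with finite signature, countable domain, oligomorphic automorphism group and
non-negative values; let `S` be a symbol whose valued relation attains `0` and a positive
finite value, let `m` be the least positive value of `S^Γ` and `M` the largest finite value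
attained by any valued relation of `Γ`, and let `R = Opt(S^Γ)`.  If `φ = Σ_{i=1}^k φ_i`
is a finite formal sum of atoms over `τ ∪ {R}` and `φ'` is obtained from `φ` by replacing
every atom involving `R` by `k·⌈M/m⌉+1` copies of the same atom with `R` replaced by `S`,
then for every threshold `u ∈ ℚ` and every assignment `a`:
`φ'(a) ≤ min(kM, u)` iff `φ(a) ≤ u`. -/
theorem opt_reduction_correct {τ : Signature} [Finite τ.symbols] {C : Type} [Countable C]
    (Γ : VStruct τ C) (holig : VOligo Γ)
    (hpos : ∀ (s : τ.symbols) (a : Fin (τ.arity s) → C), 0 ≤ Γ s a)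
    (S : τ.symbols)
    (hS0 : ∃ a, Γ S a = 0)
    (m : ℚ) (hm0 : 0 < m) (hmatt : ∃ a, Γ S a = (m : QInf))
    (hmmin : ∀ (a : Fin (τ.arity S) → C) (q : ℚ), Γ S a = (q : QInf) → 0 < q → m ≤ q)
    (M : ℚ) (hMatt : ∃ s a, Γ s a = (M : QInf))
    (hMmax : ∀ (s : τ.symbols) (a : Fin (τ.arity s) → C) (q : ℚ),
      Γ s a = (q : QInf) → q ≤ M)
    {n : ℕ} (φ : List (SAtom τ (Fin n) ⊕ (Fin (τ.arity S) → Fin n))) :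
    ∀ (u : ℚ) (a : Fin n → C),
      ((φ.map (Sum.elim
          (fun b => Γ b.sym fun i => a (b.vars i))
          (fun v => (φ.length * (⌈M / m⌉).toNat + 1) • Γ S fun i => a (v i)))).sum
        ≤ min (((φ.length : ℚ) * M : ℚ) : QInf) (u : QInf))
      ↔ ((φ.map (Sum.elim
            (fun b => Γ b.sym fun i => a (b.vars i))
            (fun v => if Γ S (fun i => a (v i)) = 0 then (0 : QInf) else ⊤))).sum
          ≤ (u : QInf)) :=
  opt_reduction_correct_general Γ hpos S hS0 m hm0 hmmin M hMmax φ
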